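/- arXiv:1512.02174 — 3 statements merged into one kernel-verified Lean document; each statement's English description precedes it below -/
import Mathlib

section
/- Let μ be a σ-finite measure, w a measurable weight function bounded away from 0 and ∞, and let Π_w and Π denote the weighted projections in L_2(μ) onto a fixed closed subspace L relative to the weight functions w and 1 respectively. Then for any conjugate exponents r^{-1} + s^{-1} = 1 and p^{-1} + q^{-1} = 1 and any g ∈ L_2(μ), ‖(Π_w − Π) g‖_r ≤ ‖Π‖_s · ‖(I − Π_w) g‖_{rq} · ‖w − 1‖_{rp}, provided Π is bounded as an operator on L_s(μ) with norm ‖Π‖_s. -/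
/-!
Put `d = (Π_w - Π) g ∈ L` and `u = (I - Π_w) g`. For a test function `F`, orthogonality of
`I - Π` to `L` gives `∫ d F = ∫ d (Π F)`, and orthogonality of `I - Π` and `I - Π_w` to
`Π F ∈ L` (in `L₂(μ)` and `L₂(w μ)`) gives `∫ d (Π F) = ∫ u (w - 1) (Π F)`. Two Hölder
inequalities and the `L_s` bound on `Π` then give
`∫ d F ≤ ‖Π‖_s ‖u‖_{rq} ‖w - 1‖_{rp} ‖F‖_s`.
The `L_r` norm of `d` is recovered by duality: test against `F = |d|^r / d` restricted to
`{1/(n+1) ≤ |d| ≤ n}`, a set of finite measure because `d ∈ L₂`, and let `n → ∞` (Fatou).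
-/

open MeasureTheory ENNReal Filter Topology

lemma abs_abs_rpow_div_self_rpow {y r s : ℝ} (hrs : r.HolderConjugate s) (hy : y ≠ 0) :
    |(|y| ^ r / y)| ^ s = |y| ^ r := by
  rw [abs_div, abs_of_nonneg (by positivity), ← Real.rpow_sub_one (abs_ne_zero.2 hy),
    ← Real.rpow_mul (abs_nonneg y), hrs.sub_one_mul_conj]

lemma ofReal_rpow_inv_le_of_le_mul_rpow_inv {J r s : ℝ} {K : ℝ≥0∞} (hrs : r.HolderConjugate s)
    (hJ : 0 ≤ J) (h : ENNReal.ofReal J ≤ K * ENNReal.ofReal (J ^ s⁻¹)) :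
    ENNReal.ofReal (J ^ r⁻¹) ≤ K := by
  rcases hJ.eq_or_lt with rfl | hJ
  · simp [Real.zero_rpow hrs.inv_ne_zero]
  have hJs : 0 < J ^ s⁻¹ := Real.rpow_pos_of_pos hJ _
  rw [← ENNReal.mul_le_mul_iff_left (ENNReal.ofReal_pos.2 hJs).ne' ENNReal.ofReal_ne_top,
    ← ENNReal.ofReal_mul (by positivity), ← Real.rpow_add hJ, hrs.inv_add_inv_eq_one,
    Real.rpow_one]
  exact h

lemma Real.HolderConjugate.holderTriple_mul {p q : ℝ} (h : p.HolderConjugate q) {r : ℝ}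
    (hr : 0 < r) : (r * p).HolderTriple (r * q) r :=
  ⟨by rw [mul_inv, mul_inv, ← mul_add, h.inv_add_inv_eq_one, mul_one],
    mul_pos hr h.pos, mul_pos hr h.symm.pos⟩

def truncBand (n : ℕ) : Set ℝ := {t | 1 / ((n : ℝ) + 1) ≤ |t| ∧ |t| ≤ n}

lemma measurableSet_truncBand (n : ℕ) : MeasurableSet (truncBand n) :=
  (measurableSet_le measurable_const measurable_abs).inter
    (measurableSet_le measurable_abs measurable_const)

lemma tendsto_indicator_truncBand (t : ℝ) :
    Tendsto (fun n => (truncBand n).indicator id t) atTop (𝓝 t) := by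
  rcases eq_or_ne t 0 with rfl | ht
  · exact tendsto_const_nhds.congr fun n =>
      (Set.indicator_apply_eq_self (f := id).2 fun _ => rfl).symm
  refine tendsto_const_nhds.congr' ?_
  have hlow := tendsto_one_div_add_atTop_nhds_zero_nat.eventually_le_const (abs_pos.2 ht)
  have hup := tendsto_natCast_atTop_atTop.eventually_ge_atTop |t|
  filter_upwards [hlow, hup] with n hn hn'
  simp [Set.indicator_of_mem (show t ∈ truncBand n from ⟨hn, hn'⟩)]

section

variable {X : Type*} [MeasurableSpace X] {μ : Measure X}

lemma memLp_indicator_of_bound {S : Set X} (hS : MeasurableSet S) (hμS : μ S ≠ ∞)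
    {f : X → ℝ} (hf : AEStronglyMeasurable f μ) {C : ℝ} (hC : ∀ x ∈ S, ‖f x‖ ≤ C)
    (p : ℝ≥0∞) : MemLp (S.indicator f) p μ := by
  rw [memLp_indicator_iff_restrict hS]
  have : IsFiniteMeasure (μ.restrict S) := isFiniteMeasure_restrict.2 hμS
  exact MemLp.of_bound hf.restrict C (ae_restrict_of_forall_mem hS hC)

lemma measure_preimage_truncBand_ne_top {d : X → ℝ} {p : ℝ≥0∞} (hd : MemLp d p μ)
    (hp0 : p ≠ 0) (hp : p ≠ ∞) (n : ℕ) : μ (d ⁻¹' truncBand n) ≠ ∞ := by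
  have hε : ENNReal.ofReal (1 / ((n : ℝ) + 1)) ≠ 0 :=
    (ENNReal.ofReal_pos.2 Nat.one_div_pos_of_nat).ne'
  refine (measure_mono fun x hx => ?_).trans_lt
    (hd.meas_ge_lt_top'_enorm hp0 hp hε (by simp)) |>.ne
  simpa [Real.enorm_eq_ofReal_abs] using ENNReal.ofReal_le_ofReal hx.1

lemma ofReal_integral_le_eLpNorm_one (f : X → ℝ) :
    ENNReal.ofReal (∫ x, f x ∂μ) ≤ eLpNorm f 1 μ :=
  (Real.ofReal_le_enorm _).trans
    ((enorm_integral_le_lintegral_enorm f).trans_eq eLpNorm_one_eq_lintegral_enorm.symm)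

lemma eLpNorm_mul_le_mul_eLpNorm {f g : X → ℝ} (hf : AEStronglyMeasurable f μ)
    (hg : AEStronglyMeasurable g μ) {p q r : ℝ≥0∞} [HolderTriple p q r] :
    eLpNorm (fun x => f x * g x) r μ ≤ eLpNorm f p μ * eLpNorm g q μ := by
  simpa using eLpNorm_le_eLpNorm_mul_eLpNorm_of_nnnorm hf hg (· * ·) 1
    (ae_of_all _ fun x => by simp [nnnorm_mul])

lemma eLpNorm_indicator_le_of_integral_mul_le {r s : ℝ} (hrs : r.HolderConjugate s)
    {d : X → ℝ} (hd : Measurable d) {S : Set X} (hS : MeasurableSet S) (hμS : μ S ≠ ∞)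
    {C : ℝ} (hdC : ∀ x ∈ S, |d x| ≤ C) (hd0 : ∀ x ∈ S, d x ≠ 0) {K : ℝ≥0∞}
    (hK : ∀ F : X → ℝ, (∀ p, MemLp F p μ) →
      ENNReal.ofReal (∫ x, d x * F x ∂μ) ≤ K * eLpNorm F (ENNReal.ofReal s) μ) :
    eLpNorm (S.indicator d) (ENNReal.ofReal r) μ ≤ K := by
  set F := S.indicator fun x => |d x| ^ r / d x
  set J := ∫ x, S.indicator (fun x => |d x| ^ r) x ∂μ
  have hF : ∀ p, MemLp F p μ := by
    refine memLp_indicator_of_bound hS hμS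
      ((hd.abs.pow_const r).div hd).aestronglyMeasurable (C := C ^ (r - 1)) fun x hx => ?_
    rw [Real.norm_eq_abs, abs_div, abs_of_nonneg (by positivity),
      ← Real.rpow_sub_one (abs_ne_zero.2 (hd0 x hx))]
    exact Real.rpow_le_rpow (abs_nonneg _) (hdC x hx) hrs.sub_one_pos.le
  have hdS : ∀ p, MemLp (S.indicator d) p μ :=
    memLp_indicator_of_bound hS hμS hd.aestronglyMeasurable hdC
  have hdF : ∫ x, d x * F x ∂μ = J := by
    refine integral_congr_ae (ae_of_all _ fun x => ?_)
    by_cases hx : x ∈ S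
    · simp [F, hx, mul_div_cancel₀ _ (hd0 x hx)]
    · simp [F, hx]
  have hFs : eLpNorm F (ENNReal.ofReal s) μ = ENNReal.ofReal (J ^ s⁻¹) := by
    rw [(hF _).eLpNorm_eq_integral_rpow_norm (by simpa using hrs.symm.pos) ofReal_ne_top,
      toReal_ofReal hrs.symm.nonneg]
    congr 3
    funext x
    by_cases hx : x ∈ S
    · simp only [F, Set.indicator_of_mem hx, Real.norm_eq_abs]
      exact abs_abs_rpow_div_self_rpow hrs (hd0 x hx)
    · simp [F, hx, Real.zero_rpow hrs.symm.ne_zero]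
  have hdr : eLpNorm (S.indicator d) (ENNReal.ofReal r) μ = ENNReal.ofReal (J ^ r⁻¹) := by
    rw [(hdS _).eLpNorm_eq_integral_rpow_norm (by simpa using hrs.pos) ofReal_ne_top,
      toReal_ofReal hrs.nonneg]
    congr 3
    funext x
    by_cases hx : x ∈ S <;> simp [hx, Real.zero_rpow hrs.ne_zero]
  rw [hdr]
  refine ofReal_rpow_inv_le_of_le_mul_rpow_inv hrs
    (integral_nonneg fun x => Set.indicator_nonneg (fun x _ => by positivity) x) ?_
  simpa only [hdF, hFs] using hK F hF

lemma eLpNorm_le_of_integral_mul_le_of_measurable {r s : ℝ} (hrs : r.HolderConjugate s)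
    {d : X → ℝ} (hd : Measurable d) {p : ℝ≥0∞} (hdp : MemLp d p μ) (hp0 : p ≠ 0) (hp : p ≠ ∞)
    {K : ℝ≥0∞} (hK : ∀ F : X → ℝ, (∀ p, MemLp F p μ) →
      ENNReal.ofReal (∫ x, d x * F x ∂μ) ≤ K * eLpNorm F (ENNReal.ofReal s) μ) :
    eLpNorm d (ENNReal.ofReal r) μ ≤ K := by
  have hS (n : ℕ) : MeasurableSet (d ⁻¹' truncBand n) := hd (measurableSet_truncBand n)
  calc eLpNorm d (ENNReal.ofReal r) μ
      ≤ atTop.liminf fun n => eLpNorm ((d ⁻¹' truncBand n).indicator d) (ENNReal.ofReal r) μ :=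
        Lp.eLpNorm_lim_le_liminf_eLpNorm (fun n => (hd.indicator (hS n)).aestronglyMeasurable) d
          (ae_of_all _ fun x => (tendsto_indicator_truncBand (d x)).congr fun n =>
            (Set.indicator_comp_right _).symm)
    _ ≤ K := liminf_le_of_frequently_le' <| Frequently.of_forall fun n =>
        eLpNorm_indicator_le_of_integral_mul_le hrs hd (hS n)
          (measure_preimage_truncBand_ne_top hdp hp0 hp n) (fun x hx => hx.2)
          (fun x hx => abs_pos.1 (Nat.one_div_pos_of_nat.trans_le hx.1)) hK

lemma eLpNorm_le_of_integral_mul_le {r s : ℝ} (hrs : r.HolderConjugate s)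
    {d : X → ℝ} {p : ℝ≥0∞} (hdp : MemLp d p μ) (hp0 : p ≠ 0) (hp : p ≠ ∞)
    {K : ℝ≥0∞} (hK : ∀ F : X → ℝ, (∀ p, MemLp F p μ) →
      ENNReal.ofReal (∫ x, d x * F x ∂μ) ≤ K * eLpNorm F (ENNReal.ofReal s) μ) :
    eLpNorm d (ENNReal.ofReal r) μ ≤ K := by
  set dm := hdp.aestronglyMeasurable.mk d
  have hd : d =ᵐ[μ] dm := hdp.aestronglyMeasurable.ae_eq_mk
  rw [eLpNorm_congr_ae hd]
  refine eLpNorm_le_of_integral_mul_le_of_measurable hrs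
    hdp.aestronglyMeasurable.stronglyMeasurable_mk.measurable (hdp.ae_eq hd) hp0 hp fun F hF => ?_
  have hdF : ∫ x, dm x * F x ∂μ = ∫ x, d x * F x ∂μ :=
    integral_congr_ae (hd.mono fun x hx => by simp only [hx])
  exact hdF ▸ hK F hF

lemma integral_mul_proj_eq {L : Submodule ℝ (X → ℝ)} (hL : ∀ l ∈ L, MemLp l 2 μ)
    {P : (X → ℝ) → (X → ℝ)} (hPL : ∀ g, MemLp g 2 μ → P g ∈ L)
    (hPorth : ∀ g, MemLp g 2 μ → ∀ l ∈ L, ∫ x, (g x - P g x) * l x ∂μ = 0)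
    {F : X → ℝ} (hF : MemLp F 2 μ) {l : X → ℝ} (hl : l ∈ L) :
    ∫ x, l x * P F x ∂μ = ∫ x, l x * F x ∂μ := by
  have hlF : Integrable (fun x => l x * F x) μ := (hL l hl).integrable_mul hF
  have hlPF : Integrable (fun x => l x * P F x) μ := (hL l hl).integrable_mul (hL _ (hPL F hF))
  have h := hPorth F hF l hl
  rw [← sub_eq_zero, ← integral_sub hlPF hlF, ← neg_eq_zero, ← integral_neg, ← h]
  exact integral_congr_ae (ae_of_all _ fun x => by ring)

lemma integral_proj_sub_proj_mul_eq {L : Submodule ℝ (X → ℝ)} (hL : ∀ l ∈ L, MemLp l 2 μ)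
    {w : X → ℝ} (hw : MemLp w ∞ μ) {Pw P : (X → ℝ) → (X → ℝ)}
    (hPwL : ∀ g, MemLp g 2 μ → Pw g ∈ L)
    (hPworth : ∀ g, MemLp g 2 μ → ∀ l ∈ L, ∫ x, (g x - Pw g x) * l x * w x ∂μ = 0)
    (hPL : ∀ g, MemLp g 2 μ → P g ∈ L)
    (hPorth : ∀ g, MemLp g 2 μ → ∀ l ∈ L, ∫ x, (g x - P g x) * l x ∂μ = 0)
    {g : X → ℝ} (hg : MemLp g 2 μ) {l : X → ℝ} (hl : l ∈ L) :
    ∫ x, (Pw g x - P g x) * l x ∂μ = ∫ x, (g x - Pw g x) * (w x - 1) * l x ∂μ := by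
  have hl2 := hL l hl
  have hPwl : Integrable (fun x => (g x - Pw g x) * l x) μ :=
    (hg.sub (hL _ (hPwL g hg))).integrable_mul hl2
  have hPl : Integrable (fun x => (g x - P g x) * l x) μ :=
    (hg.sub (hL _ (hPL g hg))).integrable_mul hl2
  have hPwlw : Integrable (fun x => (g x - Pw g x) * l x * w x) μ := hPwl.mul_of_top_left hw
  calc ∫ x, (Pw g x - P g x) * l x ∂μ
      = ∫ x, ((g x - P g x) * l x - (g x - Pw g x) * l x) ∂μ :=
        integral_congr_ae (ae_of_all _ fun x => by ring)
    _ = ∫ x, ((g x - Pw g x) * l x * w x - (g x - Pw g x) * l x) ∂μ := by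
        rw [integral_sub hPl hPwl, integral_sub hPwlw hPwl, hPorth g hg l hl,
          hPworth g hg l hl]
    _ = ∫ x, (g x - Pw g x) * (w x - 1) * l x ∂μ :=
        integral_congr_ae (ae_of_all _ fun x => by ring)

end

theorem difference_of_projections_ii_general
    {X : Type*} [MeasurableSpace X] (μ : Measure X)
    (w : X → ℝ) (hwm : Measurable w)
    (hw : ∃ c C : ℝ, 0 < c ∧ ∀ x, c ≤ w x ∧ w x ≤ C)
    (L : Submodule ℝ (X → ℝ)) (hL : ∀ l ∈ L, MemLp l 2 μ)
    (Pw P : (X → ℝ) → (X → ℝ))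
    (hPwL : ∀ g, MemLp g 2 μ → Pw g ∈ L)
    (hPworth : ∀ g, MemLp g 2 μ → ∀ l ∈ L, ∫ x, (g x - Pw g x) * l x * w x ∂μ = 0)
    (hPL : ∀ g, MemLp g 2 μ → P g ∈ L)
    (hPorth : ∀ g, MemLp g 2 μ → ∀ l ∈ L, ∫ x, (g x - P g x) * l x ∂μ = 0)
    (r s p q : ℝ) (hr : 1 < r) (hrs : 1 / r + 1 / s = 1)
    (hp : 1 < p) (hpq : 1 / p + 1 / q = 1)
    (Cs : ℝ≥0∞)
    (hPnorm : ∀ h, MemLp h (ENNReal.ofReal s) μ →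
      eLpNorm (P h) (ENNReal.ofReal s) μ ≤ Cs * eLpNorm h (ENNReal.ofReal s) μ)
    (g : X → ℝ) (hg : MemLp g 2 μ) :
    eLpNorm (fun x => Pw g x - P g x) (ENNReal.ofReal r) μ
      ≤ Cs * eLpNorm (fun x => g x - Pw g x) (ENNReal.ofReal (r * q)) μ *
          eLpNorm (fun x => w x - 1) (ENNReal.ofReal (r * p)) μ := by
  obtain ⟨c, C, hc, hwC⟩ := hw
  have hw_top : MemLp w ∞ μ := memLp_top_of_bound hwm.aestronglyMeasurable C
    (ae_of_all _ fun x => abs_le.2 ⟨by linarith [hwC x], (hwC x).2⟩)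
  have hrs' : r.HolderConjugate s := Real.holderConjugate_iff.2 ⟨hr, by simpa using hrs⟩
  have hpq' : p.HolderConjugate q := Real.holderConjugate_iff.2 ⟨hp, by simpa using hpq⟩
  have : HolderTriple (ENNReal.ofReal r) (ENNReal.ofReal s) 1 := hrs'.ennrealOfReal
  have : HolderTriple (ENNReal.ofReal (r * q)) (ENNReal.ofReal (r * p)) (ENNReal.ofReal r) :=
    (hpq'.symm.holderTriple_mul hrs'.pos).ennrealOfReal
  have hu : MemLp (fun x => g x - Pw g x) 2 μ := hg.sub (hL _ (hPwL g hg))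
  have hdL : (fun x => Pw g x - P g x) ∈ L := L.sub_mem (hPwL g hg) (hPL g hg)
  refine eLpNorm_le_of_integral_mul_le hrs' (hL _ hdL) two_ne_zero ofNat_ne_top fun F hF => ?_
  calc ENNReal.ofReal (∫ x, (Pw g x - P g x) * F x ∂μ)
      = ENNReal.ofReal (∫ x, (g x - Pw g x) * (w x - 1) * P F x ∂μ) := by
        rw [← integral_mul_proj_eq hL hPL hPorth (hF 2) hdL,
          integral_proj_sub_proj_mul_eq hL hw_top hPwL hPworth hPL hPorth hg (hPL F (hF 2))]
    _ ≤ eLpNorm (fun x => (g x - Pw g x) * (w x - 1) * P F x) 1 μ :=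
        ofReal_integral_le_eLpNorm_one _
    _ ≤ eLpNorm (fun x => (g x - Pw g x) * (w x - 1)) (ENNReal.ofReal r) μ *
          eLpNorm (P F) (ENNReal.ofReal s) μ :=
        eLpNorm_mul_le_mul_eLpNorm
          (hu.aestronglyMeasurable.mul (hwm.sub_const 1).aestronglyMeasurable)
          (hL _ (hPL F (hF 2))).aestronglyMeasurable
    _ ≤ eLpNorm (fun x => g x - Pw g x) (ENNReal.ofReal (r * q)) μ *
          eLpNorm (fun x => w x - 1) (ENNReal.ofReal (r * p)) μ *
          (Cs * eLpNorm F (ENNReal.ofReal s) μ) :=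
        mul_le_mul' (eLpNorm_mul_le_mul_eLpNorm hu.aestronglyMeasurable
          (hwm.sub_const 1).aestronglyMeasurable) (hPnorm F (hF _))
    _ = Cs * eLpNorm (fun x => g x - Pw g x) (ENNReal.ofReal (r * q)) μ *
          eLpNorm (fun x => w x - 1) (ENNReal.ofReal (r * p)) μ *
          eLpNorm F (ENNReal.ofReal s) μ := by ring

/-- **Lemma (difference of weighted and unweighted projections, part (ii)).**
Let `Pw` and `P` be the weighted projections in `L₂(μ)` onto a closed subspace `L`
relative to the weights `w` and `1`. For conjugate pairs
`r⁻¹ + s⁻¹ = 1` and `p⁻¹ + q⁻¹ = 1`, if `P` is bounded on `L_s(μ)` with norm at most `Cs`,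
then `‖(Pw − P) g‖_r ≤ Cs · ‖(I − Pw) g‖_{rq} · ‖w − 1‖_{rp}` for all `g ∈ L₂(μ)`. -/
theorem difference_of_projections_ii
    {X : Type*} [MeasurableSpace X] (μ : Measure X) [SigmaFinite μ]
    (w : X → ℝ) (hwm : Measurable w)
    (hw : ∃ c C : ℝ, 0 < c ∧ ∀ x, c ≤ w x ∧ w x ≤ C)
    (L : Submodule ℝ (X → ℝ)) (hL : ∀ l ∈ L, MemLp l 2 μ)
    (Pw P : (X → ℝ) → (X → ℝ))
    (hPwL : ∀ g, MemLp g 2 μ → Pw g ∈ L)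
    (hPworth : ∀ g, MemLp g 2 μ → ∀ l ∈ L, ∫ x, (g x - Pw g x) * l x * w x ∂μ = 0)
    (hPL : ∀ g, MemLp g 2 μ → P g ∈ L)
    (hPorth : ∀ g, MemLp g 2 μ → ∀ l ∈ L, ∫ x, (g x - P g x) * l x ∂μ = 0)
    (r s p q : ℝ) (hr : 1 < r) (hrs : 1 / r + 1 / s = 1)
    (hp : 1 < p) (hpq : 1 / p + 1 / q = 1)
    (Cs : ℝ≥0∞)
    (hPnorm : ∀ h, MemLp h (ENNReal.ofReal s) μ →
      eLpNorm (P h) (ENNReal.ofReal s) μ ≤ Cs * eLpNorm h (ENNReal.ofReal s) μ)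
    (g : X → ℝ) (hg : MemLp g 2 μ) :
    eLpNorm (fun x => Pw g x - P g x) (ENNReal.ofReal r) μ
      ≤ Cs * eLpNorm (fun x => g x - Pw g x) (ENNReal.ofReal (r * q)) μ *
          eLpNorm (fun x => w x - 1) (ENNReal.ofReal (r * p)) μ :=
  difference_of_projections_ii_general μ w hwm hw L hL Pw P hPwL hPworth hPL hPorth r s p q hr hrs
    hp hpq Cs hPnorm g hg
end

section
/- Let μ be a σ-finite measure, w a measurable weight function bounded away from 0 and ∞, and let Π_w and Π denote the weighted projections in L_2(μ) onto a fixed closed subspace L relative to the weight functions w and 1 respectively; let M_w denote multiplication by w. Then for any conjugate exponents r^{-1} + s^{-1} = 1 and any g ∈ L_2(μ), ‖Π M_w g‖_r ≤ ‖Π‖_s · ‖Π_w g‖_r · (2 + ‖w‖_∞), provided Π is bounded as an operator on L_s(μ) with norm ‖Π‖_s. -/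
open MeasureTheory ENNReal Filter Topology

/-!
For `φ ∈ L₂ ∩ L_s`, self-adjointness of `Π` and the `w`-weighted orthogonality of `g - Π_w g`
to `Π φ ∈ L` give `⟨Π M_w g, φ⟩ = ⟨M_w g, Π φ⟩ = ⟨M_w Π_w g, Π φ⟩`, so by Hölder
`⟨Π M_w g, φ⟩ ≤ ‖Π‖_s ‖M_w Π_w g‖_r ‖φ‖_s ≤ ‖Π‖_s ‖w‖_∞ ‖Π_w g‖_r ‖φ‖_s`.
The `L_r` norm of a function is recovered from such pairings: for a truncation `t` of `f`
(bounded, supported on a set of finite measure) the test function `sign t · |t|^{r-1}` makes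
Hölder's inequality an equality, and Fatou's lemma lets the truncation level go to infinity.
-/

/-- `sign a * |a| ^ (r - 1)`, the function for which Hölder's inequality pairing `L_r` with
`L_s` is an equality. -/
noncomputable def holderDual (r a : ℝ) : ℝ := a * |a| ^ (r - 2)

lemma holderDual_zero (r : ℝ) : holderDual r 0 = 0 := by simp [holderDual]

lemma mul_holderDual {r : ℝ} (hr : r ≠ 0) (a : ℝ) : a * holderDual r a = |a| ^ r := by
  rcases eq_or_ne a 0 with rfl | ha
  · simp [holderDual, Real.zero_rpow hr]
  · have ha' : 0 < |a| := abs_pos.mpr ha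
    calc a * holderDual r a = |a| ^ (2 : ℝ) * |a| ^ (r - 2) := by
          rw [holderDual, ← mul_assoc, Real.rpow_two, sq_abs, sq]
      _ = |a| ^ r := by rw [← Real.rpow_add ha']; ring_nf

lemma abs_holderDual {r : ℝ} (hr : r ≠ 1) (a : ℝ) : |holderDual r a| = |a| ^ (r - 1) := by
  rcases eq_or_ne a 0 with rfl | ha
  · simp [holderDual, Real.zero_rpow (sub_ne_zero.mpr hr)]
  · have ha' : 0 < |a| := abs_pos.mpr ha
    calc |holderDual r a| = |a| ^ (1 : ℝ) * |a| ^ (r - 2) := by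
          rw [holderDual, abs_mul, abs_of_nonneg (Real.rpow_nonneg ha'.le _), Real.rpow_one]
      _ = |a| ^ (r - 1) := by rw [← Real.rpow_add ha']; ring_nf

lemma measurable_holderDual (r : ℝ) : Measurable (holderDual r) := by
  unfold holderDual; fun_prop

lemma ENNReal.rpow_one_div_le_of_le_mul_rpow {r s : ℝ} (hrs : r.HolderConjugate s) {a B : ℝ≥0∞}
    (ha : a ≠ ∞) (h : a ≤ B * a ^ (1 / s)) : a ^ (1 / r) ≤ B := by
  rcases eq_or_ne a 0 with rfl | ha0
  · simp [ENNReal.zero_rpow_of_pos (inv_pos.mpr hrs.pos)]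
  have hsplit : a ^ (1 / r) * a ^ (1 / s) = a := by
    rw [← ENNReal.rpow_add _ _ ha0 ha, one_div, one_div, hrs.inv_add_inv_eq_one, ENNReal.rpow_one]
  have hs0 : a ^ (1 / s) ≠ 0 := (ENNReal.rpow_pos (pos_iff_ne_zero.mpr ha0) ha).ne'
  have hs_top : a ^ (1 / s) ≠ ∞ := ENNReal.rpow_ne_top_of_nonneg hrs.symm.one_div_nonneg ha
  exact (ENNReal.mul_le_mul_iff_left hs0 hs_top).mp (hsplit.trans_le h)

section

variable {X : Type*} [MeasurableSpace X] {μ : Measure X}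

lemma ofReal_integral_mul_le_eLpNorm_mul_eLpNorm {p q : ℝ≥0∞} [p.HolderConjugate q]
    {f g : X → ℝ} (hf : AEStronglyMeasurable f μ) (hg : AEStronglyMeasurable g μ) :
    ENNReal.ofReal (∫ x, f x * g x ∂μ) ≤ eLpNorm f p μ * eLpNorm g q μ :=
  calc ENNReal.ofReal (∫ x, f x * g x ∂μ) ≤ ‖∫ x, f x * g x ∂μ‖ₑ := Real.ofReal_le_enorm _
    _ ≤ eLpNorm (f • g) 1 μ := by
      rw [eLpNorm_one_eq_lintegral_enorm]; exact enorm_integral_le_lintegral_enorm _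
    _ ≤ eLpNorm f p μ * eLpNorm g q μ := eLpNorm_smul_le_mul_eLpNorm hg hf

lemma eLpNorm_ofReal_eq_lintegral {r : ℝ} (hr : 0 < r) (f : X → ℝ) :
    eLpNorm f (ENNReal.ofReal r) μ = (∫⁻ x, ‖f x‖ₑ ^ r ∂μ) ^ (1 / r) := by
  rw [eLpNorm_eq_lintegral_rpow_enorm_toReal (by simpa using hr) ofReal_ne_top,
    toReal_ofReal hr.le]

lemma eLpNorm_le_of_ofReal_integral_mul_holderDual_le {r s : ℝ} (hrs : r.HolderConjugate s)
    {t : X → ℝ} (ht : MemLp t (ENNReal.ofReal r) μ) {B : ℝ≥0∞}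
    (h : ENNReal.ofReal (∫ x, t x * holderDual r (t x) ∂μ)
      ≤ B * eLpNorm (fun x => holderDual r (t x)) (ENNReal.ofReal s) μ) :
    eLpNorm t (ENNReal.ofReal r) μ ≤ B := by
  set I := ∫⁻ x, ‖t x‖ₑ ^ r ∂μ
  have hI : I ≠ ∞ := by
    simpa [toReal_ofReal hrs.nonneg] using
      (lintegral_rpow_enorm_lt_top_of_eLpNorm_lt_top (by simpa using hrs.pos) ofReal_ne_top
        ht.eLpNorm_lt_top).ne
  have hintegral : ENNReal.ofReal (∫ x, t x * holderDual r (t x) ∂μ) = I := by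
    simp_rw [mul_holderDual hrs.ne_zero, ← Real.norm_eq_abs]
    have hint : Integrable (fun x => ‖t x‖ ^ r) μ := by
      simpa [toReal_ofReal hrs.nonneg] using
        ht.integrable_norm_rpow (by simpa using hrs.pos) ofReal_ne_top
    rw [ofReal_integral_eq_lintegral_ofReal hint (.of_forall fun x => by positivity)]
    refine lintegral_congr fun x => ?_
    rw [← ofReal_rpow_of_nonneg (norm_nonneg _) hrs.nonneg, ofReal_norm]
  have hdual : eLpNorm (fun x => holderDual r (t x)) (ENNReal.ofReal s) μ = I ^ (1 / s) := by
    rw [eLpNorm_ofReal_eq_lintegral hrs.symm.pos]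
    congr 1
    refine lintegral_congr fun x => ?_
    rw [Real.enorm_eq_ofReal_abs, Real.enorm_eq_ofReal_abs, abs_holderDual hrs.lt.ne',
      ofReal_rpow_of_nonneg (by positivity) hrs.symm.nonneg, ← Real.rpow_mul (abs_nonneg _),
      hrs.sub_one_mul_conj, ofReal_rpow_of_nonneg (abs_nonneg _) hrs.nonneg]
  rw [hintegral, hdual] at h
  rw [eLpNorm_ofReal_eq_lintegral hrs.pos]
  exact ENNReal.rpow_one_div_le_of_le_mul_rpow hrs hI h

lemma memLp_indicator_of_abs_le {S : Set X} (hS : MeasurableSet S) (hμS : μ S ≠ ∞) {t : X → ℝ}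
    (ht : AEStronglyMeasurable t μ) {c : ℝ} (hc : ∀ x ∈ S, |t x| ≤ c) (p : ℝ≥0∞) :
    MemLp (S.indicator t) p μ :=
  (memLp_indicator_const p hS c (Or.inr hμS)).of_le (ht.indicator hS) (.of_forall fun x => by
    by_cases hx : x ∈ S
    · simpa [hx] using (hc x hx).trans (le_abs_self c)
    · simp [hx])

lemma eLpNorm_indicator_le_of_forall_ofReal_integral_mul_le {r s : ℝ} (hrs : r.HolderConjugate s)
    {f : X → ℝ} (hf : Measurable f) {S : Set X} (hS : MeasurableSet S) (hμS : μ S ≠ ∞) {c : ℝ}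
    (hc : ∀ x ∈ S, |f x| ≤ c) {B : ℝ≥0∞}
    (hB : ∀ φ : X → ℝ, (∀ p, MemLp φ p μ) →
      ENNReal.ofReal (∫ x, f x * φ x ∂μ) ≤ B * eLpNorm φ (ENNReal.ofReal s) μ) :
    eLpNorm (S.indicator f) (ENNReal.ofReal r) μ ≤ B := by
  refine eLpNorm_le_of_ofReal_integral_mul_holderDual_le hrs
    (memLp_indicator_of_abs_le hS hμS hf.aestronglyMeasurable hc _) ?_
  have hdual : (fun x => holderDual r (S.indicator f x)) = S.indicator (holderDual r ∘ f) :=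
    (Set.indicator_comp_of_zero (holderDual_zero r)).symm
  have hφ : ∀ p, MemLp (S.indicator (holderDual r ∘ f)) p μ :=
    memLp_indicator_of_abs_le hS hμS ((measurable_holderDual r).comp hf).aestronglyMeasurable
      (c := c ^ (r - 1)) (fun x hx => by
        rw [Function.comp_apply, abs_holderDual hrs.lt.ne']
        exact Real.rpow_le_rpow (abs_nonneg _) (hc x hx) hrs.sub_one_pos.le)
  have hint : ∫ x, S.indicator f x * holderDual r (S.indicator f x) ∂μ
      = ∫ x, f x * S.indicator (holderDual r ∘ f) x ∂μ := by
    congr 1 with x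
    by_cases hx : x ∈ S <;> simp [hx, holderDual_zero]
  rw [hint, hdual]
  exact hB _ hφ

lemma eLpNorm_le_of_forall_ofReal_integral_mul_le {r s : ℝ} (hrs : r.HolderConjugate s)
    {q : ℝ≥0∞} (hq0 : q ≠ 0) (hq : q ≠ ∞) {f : X → ℝ} (hf : MemLp f q μ) {B : ℝ≥0∞}
    (hB : ∀ φ : X → ℝ, (∀ p, MemLp φ p μ) →
      ENNReal.ofReal (∫ x, f x * φ x ∂μ) ≤ B * eLpNorm φ (ENNReal.ofReal s) μ) :
    eLpNorm f (ENNReal.ofReal r) μ ≤ B := by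
  obtain ⟨g, hgm, hfg⟩ := hf.1
  have hg : MemLp g q μ := hf.ae_eq hfg
  replace hB : ∀ φ : X → ℝ, (∀ p, MemLp φ p μ) →
      ENNReal.ofReal (∫ x, g x * φ x ∂μ) ≤ B * eLpNorm φ (ENNReal.ofReal s) μ := fun φ hφ => by
    rw [← integral_congr_ae (hfg.mono fun x hx => by simp only [hx] :
      (fun x => f x * φ x) =ᵐ[μ] _)]
    exact hB φ hφ
  rw [eLpNorm_congr_ae hfg]
  set S : ℕ → Set X := fun n => {x | 1 / ((n : ℝ) + 1) ≤ |g x| ∧ |g x| ≤ n + 1}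
  have hSm : ∀ n, MeasurableSet (S n) := fun n =>
    (measurableSet_le measurable_const hgm.measurable.abs).inter
      (measurableSet_le hgm.measurable.abs measurable_const)
  have hSμ : ∀ n, μ (S n) ≠ ∞ := fun n => by
    refine (measure_mono fun x hx => ?_).trans_lt (hg.meas_ge_lt_top' hq0 hq
      (ε := ENNReal.ofReal (1 / ((n : ℝ) + 1))) (by simp; positivity)) |>.ne
    simpa [← enorm_eq_nnnorm, Real.enorm_eq_ofReal_abs] using ENNReal.ofReal_le_ofReal hx.1
  have hlim : ∀ x, Tendsto (fun n => (S n).indicator g x) atTop (𝓝 (g x)) := by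
    intro x
    rcases eq_or_ne (g x) 0 with hx | hx
    · simp only [Set.indicator_apply_eq_self.mpr fun _ => hx]
      exact tendsto_const_nhds
    refine tendsto_const_nhds.congr' ?_
    have hlow : ∀ᶠ n : ℕ in atTop, 1 / ((n : ℝ) + 1) ≤ |g x| :=
      tendsto_one_div_add_atTop_nhds_zero_nat.eventually (ge_mem_nhds (abs_pos.mpr hx))
    have hup : ∀ᶠ n : ℕ in atTop, |g x| ≤ n + 1 :=
      (tendsto_natCast_atTop_atTop.atTop_add tendsto_const_nhds).eventually_ge_atTop _
    exact (hlow.and hup).mono fun n hn => (Set.indicator_of_mem (show x ∈ S n from hn) g).symm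
  calc eLpNorm g (ENNReal.ofReal r) μ
      ≤ atTop.liminf fun n => eLpNorm ((S n).indicator g) (ENNReal.ofReal r) μ :=
        Lp.eLpNorm_lim_le_liminf_eLpNorm (fun n => hgm.aestronglyMeasurable.indicator (hSm n)) g
          (.of_forall hlim)
    _ ≤ B := liminf_le_of_frequently_le' (.of_forall fun n =>
        eLpNorm_indicator_le_of_forall_ofReal_integral_mul_le hrs hgm.measurable (hSm n) (hSμ n)
          (fun x hx => hx.2) hB)

lemma integral_mul_eq_of_integral_sub_mul_eq_zero {u v l : X → ℝ} (hu : MemLp u 2 μ)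
    (hv : MemLp v 2 μ) (hl : MemLp l 2 μ) (h : ∫ x, (u x - v x) * l x ∂μ = 0) :
    ∫ x, u x * l x ∂μ = ∫ x, v x * l x ∂μ := by
  simp_rw [sub_mul] at h
  have hul : Integrable (fun x => u x * l x) μ := hu.integrable_mul hl
  have hvl : Integrable (fun x => v x * l x) μ := hv.integrable_mul hl
  rwa [integral_sub hul hvl, sub_eq_zero] at h

lemma integral_proj_mul_eq_integral_mul_proj {L : Submodule ℝ (X → ℝ)}
    (hL : ∀ l ∈ L, MemLp l 2 μ) {P : (X → ℝ) → (X → ℝ)} (hPL : ∀ g, MemLp g 2 μ → P g ∈ L)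
    (hPorth : ∀ g, MemLp g 2 μ → ∀ l ∈ L, ∫ x, (g x - P g x) * l x ∂μ = 0)
    {u v : X → ℝ} (hu : MemLp u 2 μ) (hv : MemLp v 2 μ) :
    ∫ x, P u x * v x ∂μ = ∫ x, u x * P v x ∂μ := by
  have hPu := hL _ (hPL u hu)
  have hPv := hL _ (hPL v hv)
  calc ∫ x, P u x * v x ∂μ = ∫ x, v x * P u x ∂μ := by simp_rw [mul_comm]
    _ = ∫ x, P v x * P u x ∂μ :=
        integral_mul_eq_of_integral_sub_mul_eq_zero hv hPv hPu (hPorth v hv _ (hPL u hu))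
    _ = ∫ x, P u x * P v x ∂μ := by simp_rw [mul_comm]
    _ = ∫ x, u x * P v x ∂μ :=
        (integral_mul_eq_of_integral_sub_mul_eq_zero hu hPu hPv (hPorth u hu _ (hPL v hv))).symm

lemma integral_proj_weight_mul_eq {L : Submodule ℝ (X → ℝ)}
    (hL : ∀ l ∈ L, MemLp l 2 μ) {P : (X → ℝ) → (X → ℝ)} (hPL : ∀ g, MemLp g 2 μ → P g ∈ L)
    (hPorth : ∀ g, MemLp g 2 μ → ∀ l ∈ L, ∫ x, (g x - P g x) * l x ∂μ = 0)
    {w : X → ℝ} (hw : MemLp w ∞ μ) {g h : X → ℝ} (hg : MemLp g 2 μ) (hh : MemLp h 2 μ)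
    (hgh : ∀ l ∈ L, ∫ x, (g x - h x) * l x * w x ∂μ = 0) {φ : X → ℝ} (hφ : MemLp φ 2 μ) :
    ∫ x, P (fun y => w y * g y) x * φ x ∂μ = ∫ x, w x * h x * P φ x ∂μ := by
  have hwg : MemLp (fun x => w x * g x) 2 μ := hg.mul' hw
  rw [integral_proj_mul_eq_integral_mul_proj hL hPL hPorth hwg hφ]
  refine integral_mul_eq_of_integral_sub_mul_eq_zero hwg (hh.mul' hw) (hL _ (hPL φ hφ)) ?_
  rw [← hgh _ (hPL φ hφ)]
  congr 1 with x
  ring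

end

theorem difference_of_projections_iv_general
    {X : Type*} [MeasurableSpace X] (μ : Measure X)
    (w : X → ℝ) (hwm : Measurable w)
    (hw : ∃ c C : ℝ, 0 < c ∧ ∀ x, c ≤ w x ∧ w x ≤ C)
    (L : Submodule ℝ (X → ℝ)) (hL : ∀ l ∈ L, MemLp l 2 μ)
    (Pw P : (X → ℝ) → (X → ℝ))
    (hPwL : ∀ g, MemLp g 2 μ → Pw g ∈ L)
    (hPworth : ∀ g, MemLp g 2 μ → ∀ l ∈ L, ∫ x, (g x - Pw g x) * l x * w x ∂μ = 0)
    (hPL : ∀ g, MemLp g 2 μ → P g ∈ L)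
    (hPorth : ∀ g, MemLp g 2 μ → ∀ l ∈ L, ∫ x, (g x - P g x) * l x ∂μ = 0)
    (r s : ℝ) (hr : 1 < r) (hrs : 1 / r + 1 / s = 1)
    (Cs : ℝ≥0∞)
    (hPnorm : ∀ h, MemLp h (ENNReal.ofReal s) μ →
      eLpNorm (P h) (ENNReal.ofReal s) μ ≤ Cs * eLpNorm h (ENNReal.ofReal s) μ)
    (g : X → ℝ) (hg : MemLp g 2 μ) :
    eLpNorm (P (fun y => w y * g y)) (ENNReal.ofReal r) μ
      ≤ Cs * eLpNorm (Pw g) (ENNReal.ofReal r) μ * (2 + eLpNorm w ⊤ μ) := by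
  obtain ⟨c, C, hc, hwC⟩ := hw
  have hw_top : MemLp w ∞ μ := memLp_top_of_bound hwm.aestronglyMeasurable C (.of_forall fun x => by
    rw [Real.norm_eq_abs, abs_of_pos (hc.trans_le (hwC x).1)]; exact (hwC x).2)
  have hconj : r.HolderConjugate s :=
    Real.holderConjugate_iff.mpr ⟨hr, by simpa only [one_div] using hrs⟩
  have := hconj.ennrealOfReal
  have hPwg : MemLp (Pw g) 2 μ := hL _ (hPwL g hg)
  calc eLpNorm (P fun y => w y * g y) (ENNReal.ofReal r) μ
      ≤ Cs * eLpNorm (fun x => w x * Pw g x) (ENNReal.ofReal r) μ := by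
        refine eLpNorm_le_of_forall_ofReal_integral_mul_le hconj two_ne_zero ofNat_ne_top
          (hL _ (hPL _ (hg.mul' hw_top))) fun φ hφ => ?_
        rw [integral_proj_weight_mul_eq hL hPL hPorth hw_top hg hPwg (hPworth g hg) (hφ 2)]
        calc _ ≤ eLpNorm (fun x => w x * Pw g x) (ENNReal.ofReal r) μ
                * eLpNorm (P φ) (ENNReal.ofReal s) μ :=
              ofReal_integral_mul_le_eLpNorm_mul_eLpNorm (hw_top.1.mul hPwg.1)
                (hL _ (hPL φ (hφ 2))).1
          _ ≤ _ * (Cs * eLpNorm φ (ENNReal.ofReal s) μ) := by gcongr; exact hPnorm φ (hφ _)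
          _ = _ := by ring
    _ ≤ Cs * (eLpNorm w ⊤ μ * eLpNorm (Pw g) (ENNReal.ofReal r) μ) := by
        gcongr; exact eLpNorm_smul_le_eLpNorm_top_mul_eLpNorm _ hPwg.1 w
    _ ≤ Cs * eLpNorm (Pw g) (ENNReal.ofReal r) μ * (2 + eLpNorm w ⊤ μ) := by
        rw [mul_comm (eLpNorm w ⊤ μ), ← mul_assoc]; gcongr; exact le_add_self

/-- **Lemma (difference of weighted and unweighted projections, part (iv)).**
Let `Pw` and `P` be the weighted projections in `L₂(μ)` onto a closed subspace `L`
relative to the weights `w` and `1`, and `M_w` multiplication by `w`. For a conjugate pair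
`r⁻¹ + s⁻¹ = 1`, if `P` is bounded on `L_s(μ)` with norm at most `Cs`, then
`‖P M_w g‖_r ≤ Cs · ‖Pw g‖_r · (2 + ‖w‖_∞)` for all `g ∈ L₂(μ)`. -/
theorem difference_of_projections_iv
    {X : Type*} [MeasurableSpace X] (μ : Measure X) [SigmaFinite μ]
    (w : X → ℝ) (hwm : Measurable w)
    (hw : ∃ c C : ℝ, 0 < c ∧ ∀ x, c ≤ w x ∧ w x ≤ C)
    (L : Submodule ℝ (X → ℝ)) (hL : ∀ l ∈ L, MemLp l 2 μ)
    (Pw P : (X → ℝ) → (X → ℝ))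
    (hPwL : ∀ g, MemLp g 2 μ → Pw g ∈ L)
    (hPworth : ∀ g, MemLp g 2 μ → ∀ l ∈ L, ∫ x, (g x - Pw g x) * l x * w x ∂μ = 0)
    (hPL : ∀ g, MemLp g 2 μ → P g ∈ L)
    (hPorth : ∀ g, MemLp g 2 μ → ∀ l ∈ L, ∫ x, (g x - P g x) * l x ∂μ = 0)
    (r s : ℝ) (hr : 1 < r) (hrs : 1 / r + 1 / s = 1)
    (Cs : ℝ≥0∞)
    (hPnorm : ∀ h, MemLp h (ENNReal.ofReal s) μ →
      eLpNorm (P h) (ENNReal.ofReal s) μ ≤ Cs * eLpNorm h (ENNReal.ofReal s) μ)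
    (g : X → ℝ) (hg : MemLp g 2 μ) :
    eLpNorm (P (fun y => w y * g y)) (ENNReal.ofReal r) μ
      ≤ Cs * eLpNorm (Pw g) (ENNReal.ofReal r) μ * (2 + eLpNorm w ⊤ μ) :=
  difference_of_projections_iv_general μ w hwm hw L hL Pw P hPwL hPworth hPL hPorth r s hr hrs Cs
    hPnorm g hg
end

section
/- Let X_1,…,X_n be i.i.d. with law P on a measurable space (X,A), let m ≠ m' with m, m' ≤ n, and let f: X^m → ℝ and g: X^{m'} → ℝ be symmetric measurable functions in L_2(P^m) and L_2(P^{m'}) respectively, each degenerate relative to P. Then E[(U_n f)(U_n g)] = 0; that is, degenerate U-statistics of distinct orders are uncorrelated. -/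
/-!
Expanding both `U`-statistics, `E[(U_n f)(U_n g)]` is a combination of the integrals
`∫ f(x ∘ ι) g(x ∘ κ)` over pairs of injections `ι : Fin m ↪ Fin n`, `κ : Fin m' ↪ Fin n`.
If, say, `m > m'`, some coordinate `ι i` is not read by `g(x ∘ κ)`. Integrating that coordinate
out first (Fubini, after rewriting the product measure as the law of `update x (ι i) y`), the
inner integral is `g(x ∘ κ) · ∫ f(update (x ∘ ι) i y) dP(y)`, which vanishes by degeneracy of `f`.
-/

open MeasureTheory

noncomputable def Ustat {X : Type*} (n m : ℕ) (f : (Fin m → X) → ℝ)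
    (x : Fin n → X) : ℝ :=
  (((n - m).factorial : ℝ) / (n.factorial : ℝ)) *
    ∑ ι : Fin m ↪ Fin n, f (fun i => x (ι i))

section ProductMeasure

variable {X : Type*} [MeasurableSpace X]

theorem measurePreserving_comp_embedding {K L : Type*} [Fintype K] [Fintype L]
    (μ : L → Measure X) [∀ j, IsProbabilityMeasure (μ j)] (ι : K ↪ L) :
    MeasurePreserving (fun x : L → X => fun i => x (ι i))
      (Measure.pi μ) (Measure.pi fun i => μ (ι i)) := by
  classical
  let e := Equiv.ofInjective ι ι.injective
  let _ : Fintype (Set.range ι) := Subtype.fintype _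
  have h := ((measurePreserving_piCongrLeft (fun j : Set.range ι => μ j) e).symm _).comp
    (measurePreserving_fst.comp
      (measurePreserving_piEquivPiSubtypeProd μ (· ∈ Set.range ι)))
  convert h using 1
  · funext x i
    simp [MeasurableEquiv.piCongrLeft, e]
  · rfl

theorem measurePreserving_update {L : Type*} [Fintype L] [DecidableEq L]
    (μ : L → Measure X) [∀ j, IsProbabilityMeasure (μ j)] (j : L) :
    MeasurePreserving (fun p : X × (L → X) => Function.update p.2 j p.1)
      ((μ j).prod (Measure.pi μ)) (Measure.pi μ) := by
  have hmeas : Measurable (fun p : X × (L → X) => Function.update p.2 j p.1) := by fun_prop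
  refine ⟨hmeas, (Measure.pi_eq fun s hs => ?_).symm⟩
  have hpre : (fun p : X × (L → X) => Function.update p.2 j p.1) ⁻¹' Set.univ.pi s
      = s j ×ˢ Set.univ.pi (Function.update s j Set.univ) := by
    ext ⟨y, x⟩
    simp only [Set.mem_preimage, Set.mem_prod, Set.mem_univ_pi, Function.update_apply]
    refine ⟨fun h => ⟨by simpa using h j, fun i => ?_⟩, fun ⟨hy, hx⟩ i => ?_⟩
    · split_ifs with hij
      · trivial
      · simpa [hij] using h i
    · split_ifs with hij
      · exact hij ▸ hy
      · simpa [hij] using hx i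
  rw [Measure.map_apply hmeas (.univ_pi hs), hpre, Measure.prod_prod, Measure.pi_pi]
  simp_rw [Function.apply_update (fun i => μ i), measure_univ]
  rw [Finset.prod_update_of_mem (Finset.mem_univ j), one_mul, ← Finset.compl_eq_univ_sdiff]
  exact (Fintype.prod_eq_mul_prod_compl j fun i => μ i (s i)).symm

theorem integral_eq_integral_integral_update {L E : Type*} [Fintype L] [DecidableEq L]
    [NormedAddCommGroup E] [NormedSpace ℝ E]
    (μ : L → Measure X) [∀ j, IsProbabilityMeasure (μ j)] (j : L)
    {F : (L → X) → E} (hF : Integrable F (Measure.pi μ)) :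
    ∫ x, F x ∂Measure.pi μ = ∫ x, ∫ y, F (Function.update x j y) ∂μ j ∂Measure.pi μ := by
  have hmp := measurePreserving_update μ j
  calc ∫ x, F x ∂Measure.pi μ
      = ∫ x, F x ∂((μ j).prod (Measure.pi μ)).map (fun p => Function.update p.2 j p.1) := by
        rw [hmp.map_eq]
    _ = ∫ p, F (Function.update p.2 j p.1) ∂(μ j).prod (Measure.pi μ) :=
        integral_map hmp.measurable.aemeasurable
          (by rw [hmp.map_eq]; exact hF.aestronglyMeasurable)
    _ = _ := integral_prod_symm _ (hmp.integrable_comp_of_integrable hF)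

end ProductMeasure

section DegenerateKernel

open scoped ENNReal

variable {X : Type*} [MeasurableSpace X] {P : Measure X} [IsProbabilityMeasure P]
  {K K' L : Type*} [Fintype K] [Fintype K'] [Fintype L]

theorem MeasureTheory.MemLp.comp_embedding {E : Type*} [NormedAddCommGroup E] {p : ℝ≥0∞}
    {f : (K → X) → E} (hf : MemLp f p (Measure.pi fun _ => P)) (ι : K ↪ L) :
    MemLp (fun x : L → X => f fun i => x (ι i)) p (Measure.pi fun _ => P) :=
  hf.comp_measurePreserving (measurePreserving_comp_embedding _ ι)

variable [DecidableEq K] [DecidableEq L]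

theorem integral_comp_embedding_mul_eq_zero {f : (K → X) → ℝ} {G : (L → X) → ℝ}
    (hf : MemLp f 2 (Measure.pi fun _ => P)) (hG : MemLp G 2 (Measure.pi fun _ => P))
    (ι : K ↪ L) (i : K)
    (hfdeg : ∀ᵐ x ∂(Measure.pi fun _ => P), ∫ y, f (Function.update x i y) ∂P = 0)
    (hGi : ∀ x y, G (Function.update x (ι i) y) = G x) :
    ∫ x, f (fun k => x (ι k)) * G x ∂(Measure.pi fun _ => P) = 0 := by
  have hcomp_update : ∀ (x : L → X) y,
      (fun k => Function.update x (ι i) y (ι k)) = Function.update (fun k => x (ι k)) i y :=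
    fun x y => Function.update_comp_eq_of_injective x ι.injective i y
  have hinner : ∀ᵐ x ∂(Measure.pi fun _ => P),
      ∫ y, f (fun k => Function.update x (ι i) y (ι k)) * G (Function.update x (ι i) y) ∂P
        = 0 := by
    filter_upwards [(measurePreserving_comp_embedding (fun _ => P) ι).quasiMeasurePreserving.ae
      hfdeg] with x hx
    simp_rw [hcomp_update, hGi, integral_mul_const, hx, zero_mul]
  rw [integral_eq_integral_integral_update _ (ι i)
      (F := fun x => f (fun k => x (ι k)) * G x) ((hf.comp_embedding ι).integrable_mul hG),
    integral_congr_ae hinner, integral_zero]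

theorem integral_comp_mul_comp_eq_zero_of_card_lt {f : (K → X) → ℝ} {g : (K' → X) → ℝ}
    (hcard : Fintype.card K' < Fintype.card K)
    (hf : MemLp f 2 (Measure.pi fun _ => P)) (hg : MemLp g 2 (Measure.pi fun _ => P))
    (hfdeg : ∀ i, ∀ᵐ x ∂(Measure.pi fun _ => P), ∫ y, f (Function.update x i y) ∂P = 0)
    (ι : K ↪ L) (κ : K' ↪ L) :
    ∫ x, f (fun i => x (ι i)) * g (fun i => x (κ i)) ∂(Measure.pi fun _ => P) = 0 := by
  obtain ⟨_, hmem, hi⟩ := Finset.exists_mem_notMem_of_card_lt_card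
    (s := Finset.univ.map κ) (t := Finset.univ.map ι) (by simpa using hcard)
  obtain ⟨i, -, rfl⟩ := Finset.mem_map.mp hmem
  refine integral_comp_embedding_mul_eq_zero hf (hg.comp_embedding κ) ι i (hfdeg i)
    fun x y => congrArg g (funext fun k => Function.update_of_ne ?_ y x)
  rintro hk
  exact hi (hk ▸ Finset.mem_map_of_mem κ (Finset.mem_univ k))

theorem integral_comp_mul_comp_eq_zero_of_card_ne [DecidableEq K']
    {f : (K → X) → ℝ} {g : (K' → X) → ℝ}
    (hcard : Fintype.card K ≠ Fintype.card K')
    (hf : MemLp f 2 (Measure.pi fun _ => P)) (hg : MemLp g 2 (Measure.pi fun _ => P))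
    (hfdeg : ∀ i, ∀ᵐ x ∂(Measure.pi fun _ => P), ∫ y, f (Function.update x i y) ∂P = 0)
    (hgdeg : ∀ i, ∀ᵐ x ∂(Measure.pi fun _ => P), ∫ y, g (Function.update x i y) ∂P = 0)
    (ι : K ↪ L) (κ : K' ↪ L) :
    ∫ x, f (fun i => x (ι i)) * g (fun i => x (κ i)) ∂(Measure.pi fun _ => P) = 0 := by
  rcases hcard.lt_or_gt with hlt | hgt
  · simp_rw [mul_comm (f _)]
    exact integral_comp_mul_comp_eq_zero_of_card_lt hlt hg hf hgdeg κ ι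
  · exact integral_comp_mul_comp_eq_zero_of_card_lt hgt hf hg hfdeg ι κ

end DegenerateKernel

theorem degenerate_ustat_distinct_orders_uncorrelated_general
    {X : Type*} [MeasurableSpace X] (P : Measure X) [IsProbabilityMeasure P]
    (m m' n : ℕ) (hmm' : m ≠ m')
    (f : (Fin m → X) → ℝ) (g : (Fin m' → X) → ℝ)
    (hf2 : MemLp f 2 (Measure.pi fun _ : Fin m => P))
    (hg2 : MemLp g 2 (Measure.pi fun _ : Fin m' => P))
    (hfdeg : ∀ i : Fin m, ∀ᵐ x ∂(Measure.pi fun _ : Fin m => P),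
      ∫ y, f (Function.update x i y) ∂P = 0)
    (hgdeg : ∀ i : Fin m', ∀ᵐ x ∂(Measure.pi fun _ : Fin m' => P),
      ∫ y, g (Function.update x i y) ∂P = 0) :
    ∫ x : Fin n → X, Ustat n m f x * Ustat n m' g x ∂(Measure.pi fun _ => P) = 0 := by
  have hint : ∀ (ι : Fin m ↪ Fin n) (κ : Fin m' ↪ Fin n), Integrable
      (fun x : Fin n → X => f (fun i => x (ι i)) * g (fun i => x (κ i)))
      (Measure.pi fun _ => P) :=
    fun ι κ => (hf2.comp_embedding ι).integrable_mul (hg2.comp_embedding κ)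
  have hterm : ∀ (ι : Fin m ↪ Fin n) (κ : Fin m' ↪ Fin n),
      ∫ x, f (fun i => x (ι i)) * g (fun i => x (κ i)) ∂(Measure.pi fun _ => P) = 0 :=
    integral_comp_mul_comp_eq_zero_of_card_ne (by simpa using hmm') hf2 hg2 hfdeg hgdeg
  simp only [Ustat, mul_mul_mul_comm, Finset.sum_mul_sum]
  rw [integral_const_mul,
    integral_finsetSum _ fun ι _ => integrable_finsetSum _ fun κ _ => hint ι κ]
  simp [integral_finsetSum _ fun κ _ => hint _ κ, hterm]

/-- **Lemma (degenerate U-statistics of distinct orders are uncorrelated).**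
If `f : X^m → ℝ` and `g : X^{m'} → ℝ` with `m ≠ m'` are symmetric, `P`-degenerate and
square integrable, then `E[(U_n f)(U_n g)] = 0`. -/
theorem degenerate_ustat_distinct_orders_uncorrelated
    {X : Type*} [MeasurableSpace X] (P : Measure X) [IsProbabilityMeasure P]
    (m m' n : ℕ) (hmm' : m ≠ m') (hmn : m ≤ n) (hm'n : m' ≤ n)
    (f : (Fin m → X) → ℝ) (g : (Fin m' → X) → ℝ)
    (hfm : Measurable f) (hgm : Measurable g)
    (hf2 : MemLp f 2 (Measure.pi fun _ : Fin m => P))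
    (hg2 : MemLp g 2 (Measure.pi fun _ : Fin m' => P))
    (hfsym : ∀ σ : Equiv.Perm (Fin m), ∀ x, f (x ∘ σ) = f x)
    (hgsym : ∀ σ : Equiv.Perm (Fin m'), ∀ x, g (x ∘ σ) = g x)
    (hfdeg : ∀ i : Fin m, ∀ᵐ x ∂(Measure.pi fun _ : Fin m => P),
      ∫ y, f (Function.update x i y) ∂P = 0)
    (hgdeg : ∀ i : Fin m', ∀ᵐ x ∂(Measure.pi fun _ : Fin m' => P),
      ∫ y, g (Function.update x i y) ∂P = 0) :
    ∫ x : Fin n → X, Ustat n m f x * Ustat n m' g x ∂(Measure.pi fun _ => P) = 0 :=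
  degenerate_ustat_distinct_orders_uncorrelated_general P m m' n hmm' f g hf2 hg2 hfdeg hgdeg
end
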